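/- arXiv:2507.21725 — 3 statements merged into one kernel-verified Lean document; each statement's English description precedes it below -/
import Mathlib

section
/- Let n ∈ ℕ and let E, A, P, Q be real n×n matrices such that P + Q = I, P·Q = Q·P = 0, E·Q = 0, and such that E₁ := E − A·Q is invertible. Let f : ℝ → ℝⁿ be any function and let x : ℝ → ℝⁿ be differentiable. Then x satisfies the linear differential-algebraic equation E·x′(t) = A·x(t) + f(t) for all t ∈ ℝ if and only if the function y := P·x satisfies, for all t ∈ ℝ, both y′(t) = P·E₁⁻¹·(A·y(t) + f(t)) and Q·x(t) = Q·E₁⁻¹·(A·y(t) + f(t)). -/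
lemma deriv_mulVec_aux {n : ℕ} (P : Matrix (Fin n) (Fin n) ℝ)
    (x : ℝ → (Fin n → ℝ)) (hx : Differentiable ℝ x) (t : ℝ) :
    deriv (fun s => P.mulVec (x s)) t = P.mulVec (deriv x t) := by
  have h1 := (hx t).hasDerivAt
  have L := (Matrix.mulVecLin P).toContinuousLinearMap
  have h2 : HasDerivAt (fun s => (Matrix.mulVecLin P).toContinuousLinearMap (x s))
      ((Matrix.mulVecLin P).toContinuousLinearMap (deriv x t)) t :=
    ((Matrix.mulVecLin P).toContinuousLinearMap.hasFDerivAt).comp_hasDerivAt t h1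
  simpa using h2.deriv

lemma key_aux {n : ℕ} (E A P Q : Matrix (Fin n) (Fin n) ℝ)
    (hPQ : P + Q = 1) (hPQ0 : P * Q = 0) (hQP0 : Q * P = 0)
    (hEQ : E * Q = 0) (hE1 : IsUnit (E - A * Q))
    (u v fv : Fin n → ℝ) :
    E.mulVec u = A.mulVec v + fv ↔
      (P.mulVec u = P.mulVec ((E - A * Q)⁻¹.mulVec (A.mulVec (P.mulVec v) + fv)) ∧
       Q.mulVec v = Q.mulVec ((E - A * Q)⁻¹.mulVec (A.mulVec (P.mulVec v) + fv))) := by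
  set E₁ := E - A * Q with hE₁def
  have hdet : IsUnit E₁.det := (Matrix.isUnit_iff_isUnit_det E₁).mp hE1
  have hinv1 : E₁⁻¹ * E₁ = 1 := Matrix.nonsing_inv_mul E₁ hdet
  have hinv2 : E₁ * E₁⁻¹ = 1 := Matrix.mul_nonsing_inv E₁ hdet
  have hP2 : P * P = P := by
    have := congrArg (fun M => P * M) hPQ
    simpa [mul_add, hPQ0] using this
  have hQ2 : Q * Q = Q := by
    have := congrArg (fun M => Q * M) hPQ
    simpa [mul_add, hQP0] using this
  have hEP : E * P = E := by
    have := congrArg (fun M => E * M) hPQ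
    simpa [mul_add, hEQ] using this
  have hE₁P : E₁ * P = E := by
    rw [hE₁def, sub_mul, mul_assoc, hQP0, mul_zero, sub_zero, hEP]
  have hE₁Q : E₁ * Q = -(A * Q) := by
    rw [hE₁def, sub_mul, hEQ, mul_assoc, hQ2, zero_sub]
  have hAP : A * P = A - A * Q := by
    have := congrArg (fun M => A * M) hPQ
    simp only [mul_add, mul_one] at this
    exact eq_sub_of_add_eq this
  -- key identity : E₁ (P u + Q v) = E u - (A*Q) v
  have hkey : ∀ (u v : Fin n → ℝ),
      E₁.mulVec (P.mulVec u + Q.mulVec v) = E.mulVec u - (A * Q).mulVec v := by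
    intro u v
    rw [Matrix.mulVec_add, Matrix.mulVec_mulVec, Matrix.mulVec_mulVec, hE₁P, hE₁Q,
      Matrix.neg_mulVec]
    abel
  set w : Fin n → ℝ := A.mulVec (P.mulVec v) + fv with hw
  have hwv : w = A.mulVec v - (A * Q).mulVec v + fv := by
    rw [hw, Matrix.mulVec_mulVec, hAP, Matrix.sub_mulVec]
  constructor
  · intro h
    have h2 : E₁.mulVec (P.mulVec u + Q.mulVec v) = w := by
      rw [hkey, h, hwv]; abel
    have h3 : P.mulVec u + Q.mulVec v = E₁⁻¹.mulVec w := by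
      have := congrArg (fun s => E₁⁻¹.mulVec s) h2
      simpa [Matrix.mulVec_mulVec, hinv1] using this
    constructor
    · have := congrArg (fun s => P.mulVec s) h3
      simpa [Matrix.mulVec_add, Matrix.mulVec_mulVec, hP2, hPQ0] using this
    · have := congrArg (fun s => Q.mulVec s) h3
      simpa [Matrix.mulVec_add, Matrix.mulVec_mulVec, hQ2, hQP0] using this
  · rintro ⟨h1, h2⟩
    have h3 : P.mulVec u + Q.mulVec v = E₁⁻¹.mulVec w := by
      rw [h1, h2, Matrix.mulVec_mulVec, Matrix.mulVec_mulVec,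
        ← Matrix.add_mulVec, ← add_mul, hPQ, one_mul]
    have h4 : E.mulVec u - (A * Q).mulVec v = w := by
      rw [← hkey, h3, Matrix.mulVec_mulVec, hinv2, Matrix.one_mulVec]
    rw [hwv] at h4
    have := congrArg (fun s => s + (A * Q).mulVec v) h4
    calc E.mulVec u = E.mulVec u - (A * Q).mulVec v + (A * Q).mulVec v := by abel
    _ = A.mulVec v - (A * Q).mulVec v + fv + (A * Q).mulVec v := by rw [h4]
    _ = A.mulVec v + fv := by abel

/-- Decoupling of a linear differential-algebraic equation into a differential part
(for `y = P·x`) and an algebraic part (for `z = Q·x`). -/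
theorem stmt_0 (n : ℕ) (E A P Q : Matrix (Fin n) (Fin n) ℝ)
    (hPQ : P + Q = 1) (hPQ0 : P * Q = 0) (hQP0 : Q * P = 0)
    (hEQ : E * Q = 0) (hE1 : IsUnit (E - A * Q))
    (f : ℝ → (Fin n → ℝ)) (x : ℝ → (Fin n → ℝ)) (hx : Differentiable ℝ x) :
    (∀ t : ℝ, E.mulVec (deriv x t) = A.mulVec (x t) + f t) ↔
      (∀ t : ℝ,
        deriv (fun s => P.mulVec (x s)) t =
          P.mulVec ((E - A * Q)⁻¹.mulVec (A.mulVec (P.mulVec (x t)) + f t)) ∧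
        Q.mulVec (x t) =
          Q.mulVec ((E - A * Q)⁻¹.mulVec (A.mulVec (P.mulVec (x t)) + f t))) := by
  have hd : ∀ t, deriv (fun s => P.mulVec (x s)) t = P.mulVec (deriv x t) :=
    deriv_mulVec_aux P x hx
  constructor
  · intro h t
    rw [hd t]
    exact (key_aux E A P Q hPQ hPQ0 hQP0 hEQ hE1 (deriv x t) (x t) (f t)).mp (h t)
  · intro h t
    have := h t
    rw [hd t] at this
    exact (key_aux E A P Q hPQ hPQ0 hQP0 hEQ hE1 (deriv x t) (x t) (f t)).mpr this
end

section
/- Let m, n_C, n_L, n_R, n_V ∈ ℕ and let A_C ∈ ℝ^{m×n_C}, A_L ∈ ℝ^{m×n_L}, A_R ∈ ℝ^{m×n_R}, A_V ∈ ℝ^{m×n_V}, S ∈ ℝ^{m×2} be real matrices, and let C ∈ ℝ^{n_C×n_C}, L ∈ ℝ^{n_L×n_L}, R ∈ ℝ^{n_R×n_R}, M ∈ ℝ^{2×2} be symmetric positive definite. Let Q_CS ∈ ℝ^{m×m} satisfy Q_CS² = Q_CS and have range equal to {x ∈ ℝᵐ : A_Cᵀx = 0 and Sᵀx = 0}. On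 ℝⁿ with n = m + n_L + n_V, define the block matrices E = diag(A_C C A_Cᵀ + S M Sᵀ, L, 0), A = [[−A_R R A_Rᵀ, −A_L, −A_V], [A_Lᵀ, 0, 0], [A_Vᵀ, 0, 0]], and Q = diag(Q_CS, 0, I_{n_V}). Assume the index-1 topological conditions: (i) the only x ∈ ℝᵐ with Sᵀx = 0, A_Cᵀx = 0, A_Rᵀx = 0, and A_Vᵀx = 0 is x = 0; and (ii) the only v ∈ ℝ^{n_V} with Q_CSᵀ·A_V·v = 0 is v = 0. Then the matrix E₁ := E − A·Q is invertible. -/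
open Matrix

private lemma quad_eq {m k : ℕ} (W : Matrix (Fin m) (Fin k) ℝ)
    (B : Matrix (Fin k) (Fin k) ℝ) (x : Fin m → ℝ) :
    x ⬝ᵥ (W * B * Wᵀ) *ᵥ x = (Wᵀ *ᵥ x) ⬝ᵥ (B *ᵥ (Wᵀ *ᵥ x)) := by
  rw [← Matrix.mulVec_mulVec, ← Matrix.mulVec_mulVec, Matrix.dotProduct_mulVec (A := W)]
  congr 1
  rw [← Matrix.mulVec_transpose]

private lemma quad_nonneg {m k : ℕ} (W : Matrix (Fin m) (Fin k) ℝ)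
    {B : Matrix (Fin k) (Fin k) ℝ} (hB : B.PosDef) (x : Fin m → ℝ) :
    0 ≤ x ⬝ᵥ (W * B * Wᵀ) *ᵥ x := by
  rw [quad_eq]
  simpa using hB.posSemidef.dotProduct_mulVec_nonneg (Wᵀ *ᵥ x)

private lemma quad_zero {m k : ℕ} (W : Matrix (Fin m) (Fin k) ℝ)
    {B : Matrix (Fin k) (Fin k) ℝ} (hB : B.PosDef) (x : Fin m → ℝ)
    (h : x ⬝ᵥ (W * B * Wᵀ) *ᵥ x = 0) : Wᵀ *ᵥ x = 0 := by
  by_contra hne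
  have hpos := hB.dotProduct_mulVec_pos hne
  rw [quad_eq] at h
  simp only [star_trivial] at hpos
  rw [h] at hpos
  exact lt_irrefl _ hpos

private lemma mat_eq_zero_of_mulVec {a b : ℕ} (A : Matrix (Fin a) (Fin b) ℝ)
    (h : ∀ y, A *ᵥ y = 0) : A = 0 := by
  ext i j
  have := congrFun (h (Pi.single j 1)) i
  simpa [Matrix.mulVec_single] using this


private lemma dot_helper {a b : ℕ} (P : Matrix (Fin a) (Fin a) ℝ)
    (N : Matrix (Fin a) (Fin b) ℝ) (h : Pᵀ * N = 0) (u : Fin a → ℝ) (y : Fin b → ℝ) :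
    (P *ᵥ u) ⬝ᵥ (N *ᵥ y) = 0 := by
  rw [dotProduct_comm, Matrix.dotProduct_mulVec, ← Matrix.mulVec_transpose,
    Matrix.mulVec_mulVec, h, Matrix.zero_mulVec, zero_dotProduct]

/-- Under the index-1 topological conditions (no LI-cutsets, no CV-loops),
the matrix `E₁ = E - A·Q` of the network equations is invertible. -/
theorem stmt_5 (m nC nL nR nV : ℕ)
    (AC : Matrix (Fin m) (Fin nC) ℝ) (AL : Matrix (Fin m) (Fin nL) ℝ)
    (AR : Matrix (Fin m) (Fin nR) ℝ) (AV : Matrix (Fin m) (Fin nV) ℝ)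
    (S : Matrix (Fin m) (Fin 2) ℝ)
    (C : Matrix (Fin nC) (Fin nC) ℝ) (L : Matrix (Fin nL) (Fin nL) ℝ)
    (R : Matrix (Fin nR) (Fin nR) ℝ) (M : Matrix (Fin 2) (Fin 2) ℝ)
    (hC : C.PosDef) (hL : L.PosDef) (hR : R.PosDef) (hM : M.PosDef)
    (QCS : Matrix (Fin m) (Fin m) ℝ)
    (hQCS_proj : QCS * QCS = QCS)
    (hQCS_range : ∀ x : Fin m → ℝ,
      (∃ y : Fin m → ℝ, QCS.mulVec y = x) ↔
        (ACᵀ.mulVec x = 0 ∧ Sᵀ.mulVec x = 0))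
    (hLI : ∀ x : Fin m → ℝ, Sᵀ.mulVec x = 0 → ACᵀ.mulVec x = 0 →
      ARᵀ.mulVec x = 0 → AVᵀ.mulVec x = 0 → x = 0)
    (hCV : ∀ v : Fin nV → ℝ, (QCSᵀ * AV).mulVec v = 0 → v = 0) :
    IsUnit
      ((Matrix.fromBlocks (AC * C * ACᵀ + S * M * Sᵀ) 0 0
          (Matrix.fromBlocks L 0 0 0) :
        Matrix ((Fin m) ⊕ ((Fin nL) ⊕ (Fin nV)))
          ((Fin m) ⊕ ((Fin nL) ⊕ (Fin nV))) ℝ) -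
        (Matrix.fromBlocks (-(AR * R * ARᵀ))
            (Matrix.fromCols (-AL) (-AV))
            (Matrix.fromRows ALᵀ AVᵀ) 0) *
          (Matrix.fromBlocks QCS 0 0
            (Matrix.fromBlocks 0 0 0 (1 : Matrix (Fin nV) (Fin nV) ℝ)))) := by
  rw [← Matrix.mulVec_injective_iff_isUnit]
  set E₁ := ((Matrix.fromBlocks (AC * C * ACᵀ + S * M * Sᵀ) 0 0
          (Matrix.fromBlocks L 0 0 0) :
        Matrix ((Fin m) ⊕ ((Fin nL) ⊕ (Fin nV)))
          ((Fin m) ⊕ ((Fin nL) ⊕ (Fin nV))) ℝ) -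
        (Matrix.fromBlocks (-(AR * R * ARᵀ))
            (Matrix.fromCols (-AL) (-AV))
            (Matrix.fromRows ALᵀ AVᵀ) 0) *
          (Matrix.fromBlocks QCS 0 0
            (Matrix.fromBlocks 0 0 0 (1 : Matrix (Fin nV) (Fin nV) ℝ)))) with hE₁
  -- facts about the range of QCS
  have hACQ : ∀ y, ACᵀ *ᵥ (QCS *ᵥ y) = 0 := fun y => ((hQCS_range _).mp ⟨y, rfl⟩).1
  have hSQ : ∀ y, Sᵀ *ᵥ (QCS *ᵥ y) = 0 := fun y => ((hQCS_range _).mp ⟨y, rfl⟩).2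
  have hACQ' : ACᵀ * QCS = 0 := mat_eq_zero_of_mulVec _ (by
    intro y; rw [← Matrix.mulVec_mulVec]; exact hACQ y)
  have hSQ' : Sᵀ * QCS = 0 := mat_eq_zero_of_mulVec _ (by
    intro y; rw [← Matrix.mulVec_mulVec]; exact hSQ y)
  have hQAC : QCSᵀ * AC = 0 := by
    have := congrArg Matrix.transpose hACQ'
    simpa [Matrix.transpose_mul] using this
  have hQS : QCSᵀ * S = 0 := by
    have := congrArg Matrix.transpose hSQ'
    simpa [Matrix.transpose_mul] using this
  -- trivial kernel
  have key : ∀ z, E₁ *ᵥ z = 0 → z = 0 := by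
    intro z hz
    set x : Fin m → ℝ := z ∘ Sum.inl with hx
    set l : Fin nL → ℝ := fun i => z (Sum.inr (Sum.inl i)) with hl
    set v : Fin nV → ℝ := fun i => z (Sum.inr (Sum.inr i)) with hv
    have hzdef : z = Sum.elim x (Sum.elim l v) := by
      funext i; rcases i with i | (i | i) <;> rfl
    rw [hzdef, hE₁, Matrix.sub_mulVec, ← Matrix.mulVec_mulVec] at hz
    simp only [Matrix.fromBlocks_mulVec, Matrix.fromRows_mulVec,
      Matrix.fromCols_mulVec_sumElim, Matrix.zero_mulVec, Matrix.mulVec_zero,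
      Matrix.neg_mulVec, Matrix.one_mulVec, add_zero, zero_add,
      Sum.elim_comp_inl, Sum.elim_comp_inr] at hz
    set w : Fin m → ℝ := QCS *ᵥ x with hw
    -- component equations
    have h1 : (AC * C * ACᵀ + S * M * Sᵀ) *ᵥ x -
        (-((AR * R * ARᵀ) *ᵥ w) + -(AV *ᵥ v)) = 0 :=
      funext fun i => congrFun hz (Sum.inl i)
    have h2 : L *ᵥ l - ALᵀ *ᵥ w = 0 :=
      funext fun i => congrFun hz (Sum.inr (Sum.inl i))
    have h3 : (0 : Fin nV → ℝ) - AVᵀ *ᵥ w = 0 :=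
      funext fun i => congrFun hz (Sum.inr (Sum.inr i))
    have hAVw : AVᵀ *ᵥ w = 0 := by
      rw [sub_eq_zero] at h3; exact h3.symm
    have h1' : (AC * C * ACᵀ) *ᵥ x + (S * M * Sᵀ) *ᵥ x
        + (AR * R * ARᵀ) *ᵥ w + AV *ᵥ v = 0 := by
      rw [Matrix.add_mulVec] at h1
      linear_combination h1
    -- dot h1' with w to get AR^T w = 0
    have hQ1 : QCSᵀ * (AC * C * ACᵀ) = 0 := by
      rw [← Matrix.mul_assoc, ← Matrix.mul_assoc, hQAC, Matrix.zero_mul, Matrix.zero_mul]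
    have hQ2 : QCSᵀ * (S * M * Sᵀ) = 0 := by
      rw [← Matrix.mul_assoc, ← Matrix.mul_assoc, hQS, Matrix.zero_mul, Matrix.zero_mul]
    have hd1 : w ⬝ᵥ ((AC * C * ACᵀ) *ᵥ x) = 0 := by
      rw [hw]; exact dot_helper _ _ hQ1 _ _
    have hd2 : w ⬝ᵥ ((S * M * Sᵀ) *ᵥ x) = 0 := by
      rw [hw]; exact dot_helper _ _ hQ2 _ _
    have hd4 : w ⬝ᵥ (AV *ᵥ v) = 0 := by
      rw [Matrix.dotProduct_mulVec, ← Matrix.mulVec_transpose, hAVw, zero_dotProduct]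
    have hR0 : w ⬝ᵥ ((AR * R * ARᵀ) *ᵥ w) = 0 := by
      have hdall := congrArg (fun t => w ⬝ᵥ t) h1'
      simpa [dotProduct_add, hd1, hd2, hd4] using hdall
    have hARw : ARᵀ *ᵥ w = 0 := quad_zero AR hR w hR0
    have hARRw : (AR * R * ARᵀ) *ᵥ w = 0 := by
      rw [← Matrix.mulVec_mulVec, hARw, Matrix.mulVec_zero]
    have h1b : (AC * C * ACᵀ) *ᵥ x + (S * M * Sᵀ) *ᵥ x + AV *ᵥ v = 0 := by
      linear_combination h1' - hARRw
    -- apply QCS^T to get v = 0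
    have hv0 : v = 0 := by
      refine hCV v ?_
      have hQall := congrArg (fun t => QCSᵀ *ᵥ t) h1b
      simpa [Matrix.mulVec_add, Matrix.mulVec_mulVec, hQ1, hQ2] using hQall
    have h1c : (AC * C * ACᵀ) *ᵥ x + (S * M * Sᵀ) *ᵥ x = 0 := by
      rw [hv0, Matrix.mulVec_zero, add_zero] at h1b
      exact h1b
    -- dot with x to get AC^T x = 0 and S^T x = 0
    have hdx := congrArg (fun t => x ⬝ᵥ t) h1c
    simp only [dotProduct_add, dotProduct_zero] at hdx
    have hn1 := quad_nonneg AC hC x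
    have hn2 := quad_nonneg S hM x
    have hACx : ACᵀ *ᵥ x = 0 := quad_zero AC hC x (by linarith)
    have hSx : Sᵀ *ᵥ x = 0 := quad_zero S hM x (by linarith)
    -- x is in the range of QCS, so QCS x = x
    obtain ⟨y, hy⟩ := (hQCS_range x).mpr ⟨hACx, hSx⟩
    have hQx : w = x := by
      rw [hw, ← hy, Matrix.mulVec_mulVec, hQCS_proj]
    rw [hQx] at hARw hAVw
    have hx0 : x = 0 := hLI x hSx hACx hARw hAVw
    -- l = 0 from L l = 0
    have hLl : L *ᵥ l = 0 := by
      rw [sub_eq_zero] at h2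
      rw [h2, hQx, hx0, Matrix.mulVec_zero]
    have hl0 : l = 0 := by
      by_contra hne
      have hp := hL.dotProduct_mulVec_pos hne
      simp only [star_trivial] at hp
      rw [hLl, dotProduct_zero] at hp
      exact lt_irrefl _ hp
    rw [hzdef, hx0, hl0, hv0]
    funext i; rcases i with i | (i | i) <;> rfl
  intro a b hab
  have h0 : E₁ *ᵥ (a - b) = 0 := by rw [Matrix.mulVec_sub, hab, sub_self]
  exact sub_eq_zero.mp (key _ h0)
end

section
/- Let x : ℝ → ℝⁿ be differentiable and let E, A, P, Q be real n×n matrices with P + Q = I, P·Q = Q·P = 0, E·Q = 0, and E₁ := E − A·Q invertible. If E·x′(t) = A·x(t) + f(t) for all t ∈ ℝ, where f : ℝ → ℝⁿ, then the initial value satisfies the consistency condition Q·x(0) = Q·E₁⁻¹·(A·P·x(0) + f(0)). -/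
/-- Consistency condition: for a solution of `E x' = A x + f`, the algebraic
component `Q·x(0)` is determined by `P·x(0)` and `f(0)`. -/
theorem stmt_6 (n : ℕ) (E A P Q : Matrix (Fin n) (Fin n) ℝ)
    (hPQ : P + Q = 1) (hPQ0 : P * Q = 0) (hQP0 : Q * P = 0)
    (hEQ : E * Q = 0) (hE1 : IsUnit (E - A * Q))
    (f : ℝ → (Fin n → ℝ)) (x : ℝ → (Fin n → ℝ)) (hx : Differentiable ℝ x)
    (hODE : ∀ t : ℝ, E.mulVec (deriv x t) = A.mulVec (x t) + f t) :
    Q.mulVec (x 0) =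
      Q.mulVec ((E - A * Q)⁻¹.mulVec
        (A.mulVec (P.mulVec (x 0)) + f 0)) := by
  set E1 := E - A * Q with hE1def
  have hdet : IsUnit E1.det := (Matrix.isUnit_iff_isUnit_det _).mp hE1
  have hinv : E1⁻¹ * E1 = 1 := Matrix.nonsing_inv_mul _ hdet
  have hP : P = 1 - Q := by linear_combination (norm := noncomm_ring) hPQ
  have hQQ : Q * Q = Q := by
    have := congrArg (· * Q) hPQ
    simpa [add_mul, hPQ0] using this
  have hE1Q : E1 * Q = -(A * Q) := by
    rw [hE1def, sub_mul, hEQ, mul_assoc, hQQ, zero_sub]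
  have hinvAQ : E1⁻¹ * (A * Q) = -Q := by
    have : E1⁻¹ * (E1 * Q) = Q := by rw [← mul_assoc, hinv, one_mul]
    rw [hE1Q] at this
    linear_combination (norm := noncomm_ring) -this
  have hinvE : E1⁻¹ * E = 1 - Q := by
    have hE : E = E1 + A * Q := by rw [hE1def]; abel
    rw [hE, mul_add, hinv, hinvAQ, sub_eq_add_neg]
  have hvec : A.mulVec (P.mulVec (x 0)) + f 0
      = E.mulVec (deriv x 0) - (A * Q).mulVec (x 0) := by
    rw [hODE 0, Matrix.mulVec_mulVec, hP, mul_sub, mul_one,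
      Matrix.sub_mulVec]
    abel
  rw [hvec]
  simp only [Matrix.mulVec_sub, Matrix.mulVec_mulVec]
  rw [hinvE, hinvAQ, mul_sub, mul_one, hQQ, sub_self, Matrix.zero_mulVec,
    mul_neg, hQQ, Matrix.neg_mulVec, sub_neg_eq_add, zero_add]
end
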